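/- Let V be a k-vector space and, for a bounded open interval (a,b) ⊆ ℝ, let 𝕍(a,b) be the cone of Q : Map((a,b−1)∩ℤ, V) → Map((a,b)∩ℤ, V), (Qg)(x) = g(x−1) − g(x) (with g extended by zero outside (a,b−1)). If (a,b) ∩ ℤ ≠ ∅ then for any t ∈ (a,b) ∩ ℤ the map V → H⁰(𝕍(a,b)) sending v to the class of the delta function δ_t v is an isomorphism, and H^{-1}(𝕍(a,b)) = 0; moreover the isomorphism is independent of the choice of t. -/

import Mathlib

/-!
Summation `∫ f = ∑ₓ f x` over `(a,b) ∩ ℤ` kills the image of `Q`, because `∑ₓ (G (x-1) - G x)`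
telescopes to the values of the zero extension `G` of `g` at the two endpoints `⌊a⌋`, `⌈b⌉ - 1`,
where it vanishes. Conversely a function `h` with `∫ h = 0` is `Q g` for `g` minus the partial
sums of `h`; and `Q` is injective, since by the same telescoping `Q g = 0` forces the zero
extension of `g` to agree everywhere with its value `0` at `⌊a⌋`. So
`0 → Map((a,b-1)∩ℤ, V) → Map((a,b)∩ℤ, V) → V → 0` is exact, and `∫ δ_t v = v` makes `v ↦ [δ_t v]` inverse to the isomorphism `H⁰ ≅ V` induced by `∫`, for every `t`.
-/

/-- The finite-difference differential of the discrete complex `𝕍(a,b)`: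
`(Q g)(x) = g(x−1) − g(x)`, with `g` defined on `(a, b−1) ∩ ℤ` extended by zero. -/
noncomputable def Qdisc {V : Type*} [AddCommGroup V] (a b : ℝ)
    (g : {x : ℤ // a < (x : ℝ) ∧ (x : ℝ) < b - 1} → V) :
    {x : ℤ // a < (x : ℝ) ∧ (x : ℝ) < b} → V :=
  fun x =>
    (if h : a < ((x.1 - 1 : ℤ) : ℝ) ∧ ((x.1 - 1 : ℤ) : ℝ) < b - 1 then g ⟨x.1 - 1, h⟩ else 0) -
    (if h : a < (x.1 : ℝ) ∧ (x.1 : ℝ) < b - 1 then g ⟨x.1, h⟩ else 0)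

open Finset Function

section IntegerIntervals

variable {V : Type*} [AddCommGroup V]

theorem Finset.sum_Ioc_add_eq_sum_Ioc_add_one {α M : Type*} [LinearOrder α] [LocallyFiniteOrder α]
    [Add α] [One α] [SuccAddOrder α] [NoMaxOrder α] [AddCommMonoid M] {a b : α} (hab : a ≤ b)
    (f : α → M) : ∑ x ∈ Ioc a b, f x + f (b + 1) = ∑ x ∈ Ioc a (b + 1), f x := by
  rw [← insert_Ioc_right_eq_Ioc_add_one hab, sum_insert (by simp), add_comm]

theorem Finset.sum_Ioc_sub_telescope (G : ℤ → V) {m n : ℤ} (h : m ≤ n) :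
    ∑ x ∈ Ioc m n, (G (x - 1) - G x) = G m - G n := by
  induction n, h using Int.leInduction with
  | base => simp
  | succ n hmn ih =>
    rw [← sum_Ioc_add_eq_sum_Ioc_add_one hmn, ih, add_sub_cancel_right]
    abel

theorem lt_intCast_and_intCast_lt_iff {a b : ℝ} {x : ℤ} :
    a < (x : ℝ) ∧ (x : ℝ) < b ↔ ⌊a⌋ < x ∧ x < ⌈b⌉ :=
  and_congr Int.floor_lt.symm Int.lt_ceil.symm

theorem lt_intCast_and_intCast_lt_sub_one_iff {a b : ℝ} {x : ℤ} :
    a < (x : ℝ) ∧ (x : ℝ) < b - 1 ↔ ⌊a⌋ < x ∧ x < ⌈b⌉ - 1 := by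
  rw [lt_intCast_and_intCast_lt_iff, Int.ceil_sub_one]

theorem mem_Ioc_floor_ceil_sub_one_iff {a b : ℝ} {x : ℤ} :
    x ∈ Ioc ⌊a⌋ (⌈b⌉ - 1) ↔ a < (x : ℝ) ∧ (x : ℝ) < b := by
  rw [mem_Ioc, lt_intCast_and_intCast_lt_iff]; omega

end IntegerIntervals

noncomputable instance (a b : ℝ) : Fintype {x : ℤ // a < (x : ℝ) ∧ (x : ℝ) < b} :=
  Fintype.subtype (Ioc ⌊a⌋ (⌈b⌉ - 1)) fun _ => mem_Ioc_floor_ceil_sub_one_iff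

section LatticeComplex

variable {V : Type*} [AddCommGroup V] {a b : ℝ}

theorem sum_eq_sum_Ioc_extend (f : {x : ℤ // a < (x : ℝ) ∧ (x : ℝ) < b} → V) :
    ∑ x, f x = ∑ x ∈ Ioc ⌊a⌋ (⌈b⌉ - 1), Subtype.val.extend f 0 x := by
  rw [sum_subtype (Ioc ⌊a⌋ (⌈b⌉ - 1)) (p := fun x : ℤ => a < (x : ℝ) ∧ (x : ℝ) < b)
    fun _ => mem_Ioc_floor_ceil_sub_one_iff]
  exact sum_congr rfl fun x _ => (extend_val_apply (g := f) (j := 0) x.2).symm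

theorem sum_ite_val_eq {t : ℤ} (ht : a < (t : ℝ) ∧ (t : ℝ) < b) (v : V) :
    ∑ x : {x : ℤ // a < (x : ℝ) ∧ (x : ℝ) < b}, (if x.1 = t then v else 0) = v := by
  have key := Fintype.sum_ite_eq' (⟨t, ht⟩ : {x : ℤ // a < (x : ℝ) ∧ (x : ℝ) < b}) fun _ => v
  simpa only [Subtype.ext_iff] using key

theorem Qdisc_apply (g : {x : ℤ // a < (x : ℝ) ∧ (x : ℝ) < b - 1} → V)
    (x : {x : ℤ // a < (x : ℝ) ∧ (x : ℝ) < b}) :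
    Qdisc a b g x = Subtype.val.extend g 0 (x.1 - 1) - Subtype.val.extend g 0 x.1 := by
  unfold Qdisc
  congr 1 <;> split_ifs with h
  all_goals first
    | exact (extend_val_apply (g := g) (j := 0) h).symm
    | exact (extend_val_apply' (g := g) (j := 0) h).symm

theorem sum_Qdisc_eq_zero (g : {x : ℤ // a < (x : ℝ) ∧ (x : ℝ) < b - 1} → V) :
    ∑ x, Qdisc a b g x = 0 := by
  set G := Subtype.val.extend g 0
  have hG : ∀ y, ¬ (⌊a⌋ < y ∧ y < ⌈b⌉ - 1) → G y = 0 := fun y hy =>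
    extend_val_apply' (g := g) (j := 0) (by rwa [lt_intCast_and_intCast_lt_sub_one_iff])
  rw [sum_eq_sum_Ioc_extend]
  rcases le_or_gt ⌊a⌋ (⌈b⌉ - 1) with hab | hab
  · calc ∑ x ∈ Ioc ⌊a⌋ (⌈b⌉ - 1), Subtype.val.extend (Qdisc a b g) 0 x
        = ∑ x ∈ Ioc ⌊a⌋ (⌈b⌉ - 1), (G (x - 1) - G x) := sum_congr rfl fun x hx => by
          rw [extend_val_apply (g := Qdisc a b g) (j := 0) (mem_Ioc_floor_ceil_sub_one_iff.mp hx),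
            Qdisc_apply]
      _ = G ⌊a⌋ - G (⌈b⌉ - 1) := sum_Ioc_sub_telescope G hab
      _ = 0 := by rw [hG _ (by omega), hG _ (by omega), sub_zero]
  · rw [Ioc_eq_empty_of_le hab.le, sum_empty]

theorem exists_Qdisc_eq_of_sum_eq_zero (h : {x : ℤ // a < (x : ℝ) ∧ (x : ℝ) < b} → V)
    (hsum : ∑ x, h x = 0) :
    ∃ g : {x : ℤ // a < (x : ℝ) ∧ (x : ℝ) < b - 1} → V, Qdisc a b g = h := by
  set H := Subtype.val.extend h 0
  set P : ℤ → V := fun y => ∑ x ∈ Ioc ⌊a⌋ y, H x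
  set g : {x : ℤ // a < (x : ℝ) ∧ (x : ℝ) < b - 1} → V := fun y => -P y
  refine ⟨g, funext fun x => ?_⟩
  -- `-P` vanishes at `⌊a⌋` and, as `∑ h = 0`, at `⌈b⌉ - 1`.
  have hG : ∀ y, ⌊a⌋ ≤ y → y ≤ ⌈b⌉ - 1 → Subtype.val.extend g 0 y = -P y := by
    intro y hmy hyn
    by_cases hy : a < (y : ℝ) ∧ (y : ℝ) < b - 1
    · exact extend_val_apply (g := g) (j := 0) hy
    rw [extend_val_apply' (g := g) (j := 0) hy, Pi.zero_apply, eq_comm, neg_eq_zero]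
    rw [lt_intCast_and_intCast_lt_sub_one_iff] at hy
    rcases (show y = ⌊a⌋ ∨ y = ⌈b⌉ - 1 by omega) with rfl | rfl
    · exact sum_congr (Ioc_self _) fun _ _ => rfl
    · rw [← hsum, sum_eq_sum_Ioc_extend]
  obtain ⟨hmx, hxn⟩ := lt_intCast_and_intCast_lt_iff.mp x.2
  rw [Qdisc_apply, hG _ (by omega) (by omega), hG _ (by omega) (by omega)]
  have hstep : P x = P (x - 1) + H x := by
    simpa only [sub_add_cancel] using
      (sum_Ioc_add_eq_sum_Ioc_add_one (show ⌊a⌋ ≤ x.1 - 1 by omega) H).symm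
  rw [neg_sub_neg, hstep, add_sub_cancel_left]
  exact extend_val_apply (g := h) (j := 0) x.2

theorem eq_zero_of_Qdisc_eq_zero (g : {x : ℤ // a < (x : ℝ) ∧ (x : ℝ) < b - 1} → V)
    (hg : Qdisc a b g = 0) : g = 0 := by
  funext y
  set G := Subtype.val.extend g 0
  obtain ⟨hmy, hyn⟩ := lt_intCast_and_intCast_lt_sub_one_iff.mp y.2
  have hflat : ∑ x ∈ Ioc ⌊a⌋ y.1, (G (x - 1) - G x) = 0 := sum_eq_zero fun x hx => by
    have hx' : a < (x : ℝ) ∧ (x : ℝ) < b := by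
      rw [lt_intCast_and_intCast_lt_iff]; rw [mem_Ioc] at hx; omega
    exact (Qdisc_apply g ⟨x, hx'⟩).symm.trans (congrFun hg _)
  have hGm : G ⌊a⌋ = 0 := extend_val_apply' (g := g) (j := 0)
    (by rw [lt_intCast_and_intCast_lt_sub_one_iff]; omega)
  rw [sum_Ioc_sub_telescope G hmy.le, hGm, zero_sub, neg_eq_zero] at hflat
  exact (extend_val_apply (g := g) (j := 0) y.2).symm.trans hflat

end LatticeComplex

theorem stmt_19_general {V : Type*} [AddCommGroup V]
    (a b : ℝ) (t : ℤ) (ht : a < (t : ℝ) ∧ (t : ℝ) < b) :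
    (∀ v : V,
      (∃ g : {x : ℤ // a < (x : ℝ) ∧ (x : ℝ) < b - 1} → V,
        (fun x : {x : ℤ // a < (x : ℝ) ∧ (x : ℝ) < b} => if x.1 = t then v else 0) =
          Qdisc a b g) → v = 0) ∧
    (∀ f : {x : ℤ // a < (x : ℝ) ∧ (x : ℝ) < b} → V,
      ∃ (v : V) (g : {x : ℤ // a < (x : ℝ) ∧ (x : ℝ) < b - 1} → V),
        ∀ x, f x = (if x.1 = t then v else 0) + Qdisc a b g x) ∧
    (∀ g : {x : ℤ // a < (x : ℝ) ∧ (x : ℝ) < b - 1} → V, Qdisc a b g = 0 → g = 0) ∧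
    (∀ s : ℤ, a < (s : ℝ) → (s : ℝ) < b → ∀ v : V,
      ∃ g : {x : ℤ // a < (x : ℝ) ∧ (x : ℝ) < b - 1} → V,
        ∀ x : {x : ℤ // a < (x : ℝ) ∧ (x : ℝ) < b},
          (if x.1 = t then v else 0) - (if x.1 = s then v else 0) = Qdisc a b g x) := by
  refine ⟨fun v ⟨g, hg⟩ => ?_, fun f => ?_, eq_zero_of_Qdisc_eq_zero, fun s hs₁ hs₂ v => ?_⟩
  · have hsum := sum_Qdisc_eq_zero g
    rwa [← hg, sum_ite_val_eq ht] at hsum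
  · obtain ⟨g, hg⟩ := exists_Qdisc_eq_of_sum_eq_zero
      (f - fun x => if x.1 = t then ∑ y, f y else 0)
      (by simp only [Pi.sub_apply, sum_sub_distrib, sum_ite_val_eq ht, sub_self])
    exact ⟨∑ y, f y, g, fun x => by rw [hg, Pi.sub_apply, add_sub_cancel]⟩
  · obtain ⟨g, hg⟩ := exists_Qdisc_eq_of_sum_eq_zero
      (fun x : {x : ℤ // a < (x : ℝ) ∧ (x : ℝ) < b} =>
        (if x.1 = t then v else 0) - if x.1 = s then v else 0)
      (by rw [sum_sub_distrib, sum_ite_val_eq ht, sum_ite_val_eq ⟨hs₁, hs₂⟩, sub_self])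
    exact ⟨g, fun x => by rw [hg]⟩

/-- If `(a,b) ∩ ℤ ≠ ∅` then `v ↦ [δ_t v]` is an isomorphism `V ≅ H⁰(𝕍(a,b))`
(injective modulo the image of `Q`, surjective modulo the image of `Q`),
`H^{-1}(𝕍(a,b)) = 0` (i.e. `Q` is injective), and the map is independent of the
choice of `t ∈ (a,b) ∩ ℤ`. -/
theorem stmt_19 {k V : Type*} [Field k] [AddCommGroup V] [Module k V]
    (a b : ℝ) (t : ℤ) (ht : a < (t : ℝ) ∧ (t : ℝ) < b) :
    (∀ v : V,
      (∃ g : {x : ℤ // a < (x : ℝ) ∧ (x : ℝ) < b - 1} → V,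
        (fun x : {x : ℤ // a < (x : ℝ) ∧ (x : ℝ) < b} => if x.1 = t then v else 0) =
          Qdisc a b g) → v = 0) ∧
    (∀ f : {x : ℤ // a < (x : ℝ) ∧ (x : ℝ) < b} → V,
      ∃ (v : V) (g : {x : ℤ // a < (x : ℝ) ∧ (x : ℝ) < b - 1} → V),
        ∀ x, f x = (if x.1 = t then v else 0) + Qdisc a b g x) ∧
    (∀ g : {x : ℤ // a < (x : ℝ) ∧ (x : ℝ) < b - 1} → V, Qdisc a b g = 0 → g = 0) ∧
    (∀ s : ℤ, a < (s : ℝ) → (s : ℝ) < b → ∀ v : V,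
      ∃ g : {x : ℤ // a < (x : ℝ) ∧ (x : ℝ) < b - 1} → V,
        ∀ x : {x : ℤ // a < (x : ℝ) ∧ (x : ℝ) < b},
          (if x.1 = t then v else 0) - (if x.1 = s then v else 0) = Qdisc a b g x) :=
  stmt_19_general a b t ht
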